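/- arXiv:2312.12760 — 2 statements merged into one kernel-verified Lean document; each statement's English description precedes it below -/
import Mathlib

section
/- For every integer n, lim_{y→0⁺} yⁿ (y² G'(y) + 1) = 0, where G(y) = 1 + 2∑_{k=1}^∞ e^{-π k² y²}. -/
open Real Filter Set

noncomputable def Rf (y : ℝ) : ℝ := 2 * ∑' k : ℕ, Real.exp (-π * (k + 1) ^ 2 * y ^ 2)

noncomputable def Gf (y : ℝ) : ℝ := 1 + Rf y

/-! Differentiating Jacobi's inversion formula `G(1/y) = y G(y)` gives
`y² G'(y) + 1 = 4π u² S₂(u) - 2 S₀(u)` with `u = 1/y`, where `Sₚ(u) = ∑_{k ≥ 1} kᵖ e^{-π k² u²}`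
and `Sₚ'(u) = -2π u Sₚ₊₂(u)`. For `u ≥ 1` each term satisfies
`e^{-π k² u²} ≤ e^{π} e^{-π k²} e^{-π u²}`, so `Sₚ(u) = O(e^{-π u²})` decays faster than any power
of `u` as `u → ∞`, that is, as `y → 0⁺`. -/

open Asymptotics Topology

noncomputable def thetaTerm (p k : ℕ) (u : ℝ) : ℝ :=
  ((k : ℝ) + 1) ^ p * exp (-π * (k + 1) ^ 2 * u ^ 2)

noncomputable def weightedTheta (p : ℕ) (u : ℝ) : ℝ := ∑' k : ℕ, thetaTerm p k u

lemma thetaTerm_nonneg (p k : ℕ) (u : ℝ) : 0 ≤ thetaTerm p k u := by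
  unfold thetaTerm; positivity

lemma summable_thetaTerm (p : ℕ) {u : ℝ} (hu : u ≠ 0) : Summable (thetaTerm p · u) := by
  have hc : 0 < π * u ^ 2 := by positivity
  have hgeom : Summable fun k : ℕ ↦ ((k : ℝ) + 1) ^ p * exp (-(π * u ^ 2) * (k + 1)) := by
    simpa using (summable_nat_add_iff 1).2 (summable_pow_mul_exp_neg_nat_mul p hc)
  refine hgeom.of_nonneg_of_le (thetaTerm_nonneg p · u) fun k ↦ ?_
  have hk : (k : ℝ) + 1 ≤ ((k : ℝ) + 1) ^ 2 := by nlinarith [(k.cast_nonneg : (0 : ℝ) ≤ k)]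
  unfold thetaTerm
  gcongr 1
  rw [exp_le_exp]
  nlinarith

lemma thetaTerm_le_of_le (p k : ℕ) {u v : ℝ} (hu : 0 ≤ u) (huv : u ≤ v) :
    thetaTerm p k v ≤ thetaTerm p k u := by
  unfold thetaTerm
  gcongr 1
  rw [exp_le_exp, neg_mul, neg_mul, neg_mul, neg_le_neg_iff]
  gcongr

lemma thetaTerm_le_of_one_le (p k : ℕ) {u : ℝ} (hu : 1 ≤ u) :
    thetaTerm p k u ≤ exp π * thetaTerm p k 1 * exp (-π * u ^ 2) := by
  have hk : 1 ≤ ((k : ℝ) + 1) ^ 2 := by nlinarith [(k.cast_nonneg : (0 : ℝ) ≤ k)]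
  have hu2 : 1 ≤ u ^ 2 := by nlinarith
  -- `(k + 1)² u² ≥ (k + 1)² + u² - 1` because `((k + 1)² - 1) (u² - 1) ≥ 0`
  have hexp : exp (-π * (k + 1) ^ 2 * u ^ 2) ≤
      exp π * exp (-π * (k + 1) ^ 2 * 1 ^ 2) * exp (-π * u ^ 2) := by
    rw [← exp_add, ← exp_add, exp_le_exp]
    nlinarith [mul_nonneg (mul_nonneg pi_pos.le (sub_nonneg.2 hk)) (sub_nonneg.2 hu2)]
  unfold thetaTerm
  calc _ ≤ ((k : ℝ) + 1) ^ p * (exp π * exp (-π * (k + 1) ^ 2 * 1 ^ 2) * exp (-π * u ^ 2)) := by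
        gcongr
    _ = _ := by ring

lemma hasDerivAt_thetaTerm (p k : ℕ) (u : ℝ) :
    HasDerivAt (thetaTerm p k) (-2 * π * u * thetaTerm (p + 2) k u) u := by
  have h := (((hasDerivAt_pow 2 u).const_mul (-π * ((k : ℝ) + 1) ^ 2)).exp).const_mul
    (((k : ℝ) + 1) ^ p)
  refine h.congr_deriv ?_
  rw [thetaTerm]
  push_cast
  ring

lemma weightedTheta_nonneg (p : ℕ) (u : ℝ) : 0 ≤ weightedTheta p u :=
  tsum_nonneg (thetaTerm_nonneg p · u)

lemma weightedTheta_le_of_one_le (p : ℕ) {u : ℝ} (hu : 1 ≤ u) :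
    weightedTheta p u ≤ exp π * weightedTheta p 1 * exp (-π * u ^ 2) := by
  unfold weightedTheta
  rw [← tsum_mul_left, ← tsum_mul_right]
  exact Summable.tsum_le_tsum (thetaTerm_le_of_one_le p · hu)
    (summable_thetaTerm p (by positivity))
    (((summable_thetaTerm p one_ne_zero).mul_left _).mul_right _)

lemma weightedTheta_isBigO (p : ℕ) : weightedTheta p =O[atTop] fun u ↦ exp (-π * u ^ 2) := by
  refine IsBigO.of_bound (exp π * weightedTheta p 1) ?_
  filter_upwards [eventually_ge_atTop 1] with u hu
  rw [norm_of_nonneg (weightedTheta_nonneg p u), norm_of_nonneg (exp_pos _).le]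
  exact weightedTheta_le_of_one_le p hu

lemma weightedTheta_isLittleO_rpow (p : ℕ) (s : ℝ) : weightedTheta p =o[atTop] (· ^ s) :=
  (weightedTheta_isBigO p).trans_isLittleO <| by
    simpa using rexp_neg_quadratic_isLittleO_rpow_atTop (neg_lt_zero.2 pi_pos) 0 s

lemma tendsto_zpow_mul_weightedTheta (p : ℕ) (m : ℤ) :
    Tendsto (fun u ↦ u ^ m * weightedTheta p u) atTop (𝓝 0) := by
  refine (weightedTheta_isLittleO_rpow p (-m)).tendsto_div_nhds_zero.congr' ?_
  filter_upwards [eventually_gt_atTop 0] with u hu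
  rw [rpow_neg hu.le, rpow_intCast, div_inv_eq_mul, mul_comm]

lemma hasDerivAt_weightedTheta (p : ℕ) {u : ℝ} (hu : 0 < u) :
    HasDerivAt (weightedTheta p) (-2 * π * u * weightedTheta (p + 2) u) u := by
  have hbound : ∀ k, ∀ v ∈ Ioo (u / 2) (2 * u),
      ‖-2 * π * v * thetaTerm (p + 2) k v‖ ≤ 4 * π * u * thetaTerm (p + 2) k (u / 2) := by
    rintro k v ⟨hv₁, hv₂⟩
    have hv : 0 < v := by linarith
    calc ‖-2 * π * v * thetaTerm (p + 2) k v‖ = 2 * π * v * thetaTerm (p + 2) k v := by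
          rw [norm_mul, norm_of_nonneg (thetaTerm_nonneg _ _ _), norm_of_nonpos (by
            nlinarith [pi_pos])]
          ring
      _ ≤ 2 * π * (2 * u) * thetaTerm (p + 2) k (u / 2) := by
          gcongr
          · exact thetaTerm_nonneg _ _ _
          · exact thetaTerm_le_of_le _ _ (by positivity) hv₁.le
      _ = 4 * π * u * thetaTerm (p + 2) k (u / 2) := by ring
  have hu_mem : u ∈ Ioo (u / 2) (2 * u) := ⟨by linarith, by linarith⟩
  have h := hasDerivAt_tsum_of_isPreconnected
    ((summable_thetaTerm (p + 2) (by positivity)).mul_left (4 * π * u)) isOpen_Ioo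
    isPreconnected_Ioo (fun k v _ ↦ hasDerivAt_thetaTerm p k v) hbound hu_mem
    (summable_thetaTerm p hu.ne') hu_mem
  rwa [tsum_mul_left] at h

open Complex in
lemma im_ofReal_sq_mul_I (y : ℝ) : ((y : ℂ) ^ 2 * I).im = y ^ 2 := by
  simp [← ofReal_pow]

open Complex in
lemma Gf_eq_jacobiTheta {y : ℝ} (hy : y ≠ 0) : (Gf y : ℂ) = jacobiTheta ((y : ℂ) ^ 2 * I) := by
  have hterm (k : ℕ) : cexp (π * I * ((k : ℂ) + 1) ^ 2 * ((y : ℂ) ^ 2 * I)) =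
      (rexp (-π * ((k : ℝ) + 1) ^ 2 * y ^ 2) : ℂ) := by
    rw [ofReal_exp]
    push_cast
    ring_nf
    rw [I_sq]
    ring_nf
  rw [jacobiTheta_eq_tsum_nat (by rw [im_ofReal_sq_mul_I]; positivity)]
  simp_rw [hterm, Gf, Rf]
  push_cast [ofReal_tsum]
  rfl

open Complex in
lemma Gf_inv {y : ℝ} (hy : 0 < y) : Gf y⁻¹ = y * Gf y := by
  let τ : UpperHalfPlane := ⟨(y : ℂ) ^ 2 * I, by rw [im_ofReal_sq_mul_I]; positivity⟩
  have hSτ : ((ModularGroup.S • τ : UpperHalfPlane) : ℂ) = ((y⁻¹ : ℝ) : ℂ) ^ 2 * I := by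
    rw [UpperHalfPlane.modular_S_smul, UpperHalfPlane.coe_mk]
    show (-((y : ℂ) ^ 2 * I))⁻¹ = _
    rw [inv_neg, mul_inv, inv_I]
    push_cast
    ring
  have hroot : (-I * τ) ^ (1 / 2 : ℂ) = y := by
    have hsq : -I * τ = ((y ^ 2 : ℝ) : ℂ) := by
      show -I * ((y : ℂ) ^ 2 * I) = _
      push_cast
      ring_nf
      rw [I_sq]
      ring
    rw [hsq, show (1 / 2 : ℂ) = ((1 / 2 : ℝ) : ℂ) by push_cast; rfl,
      ← ofReal_cpow (by positivity), ← rpow_natCast, ← rpow_mul hy.le]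
    norm_num
  have h := jacobiTheta_S_smul τ
  rw [hSτ, hroot, ← Gf_eq_jacobiTheta (inv_ne_zero hy.ne'),
    show (τ : ℂ) = (y : ℂ) ^ 2 * I from rfl, ← Gf_eq_jacobiTheta hy.ne'] at h
  exact_mod_cast h

lemma Gf_eq_one_add_weightedTheta : Gf = fun u ↦ 1 + 2 * weightedTheta 0 u := by
  funext u
  simp [Gf, Rf, weightedTheta, thetaTerm]

lemma hasDerivAt_Gf {u : ℝ} (hu : 0 < u) : HasDerivAt Gf (-4 * π * u * weightedTheta 2 u) u := by
  rw [Gf_eq_one_add_weightedTheta]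
  exact (((hasDerivAt_weightedTheta 0 hu).const_mul 2).const_add 1).congr_deriv (by ring)

lemma sq_mul_deriv_eq_of_inv_eq {G : ℝ → ℝ} (hG : ∀ y, 0 < y → G y⁻¹ = y * G y) {y : ℝ}
    (hy : 0 < y) (hd : DifferentiableAt ℝ G y⁻¹) :
    y ^ 2 * deriv G y = -G y⁻¹ - y⁻¹ * deriv G y⁻¹ := by
  have heq : (fun z ↦ z⁻¹ * G z⁻¹) =ᶠ[𝓝 y] G := by
    filter_upwards [lt_mem_nhds hy] with z hz
    simpa using (hG z⁻¹ (inv_pos.2 hz)).symm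
  have hinv := hasDerivAt_inv hy.ne'
  rw [((hinv.mul (hd.hasDerivAt.comp y hinv)).congr_of_eventuallyEq heq.symm).deriv,
    Function.comp_apply]
  field_simp
  ring

theorem limit_y2G'_plus_one (n : ℤ) :
    Tendsto (fun y : ℝ => y ^ n * (y ^ 2 * deriv Gf y + 1)) (nhdsWithin 0 (Ioi 0)) (nhds 0) := by
  have hformula : ∀ y > 0, y ^ n * (y ^ 2 * deriv Gf y + 1) =
      4 * π * (y⁻¹ ^ (2 - n) * weightedTheta 2 y⁻¹) - 2 * (y⁻¹ ^ (-n) * weightedTheta 0 y⁻¹) := by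
    intro y hy
    have hu : 0 < y⁻¹ := inv_pos.2 hy
    rw [sq_mul_deriv_eq_of_inv_eq (fun _ ↦ Gf_inv) hy (hasDerivAt_Gf hu).differentiableAt,
      (hasDerivAt_Gf hu).deriv, Gf_eq_one_add_weightedTheta, ← neg_neg n, ← inv_zpow', neg_neg,
      show 2 - n = 2 + -n by ring, zpow_add₀ hu.ne', zpow_two]
    ring
  have hlim : Tendsto (fun u ↦ 4 * π * (u ^ (2 - n) * weightedTheta 2 u) -
      2 * (u ^ (-n) * weightedTheta 0 u)) atTop (𝓝 0) := by
    simpa using ((tendsto_zpow_mul_weightedTheta 2 (2 - n)).const_mul (4 * π)).sub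
      ((tendsto_zpow_mul_weightedTheta 0 (-n)).const_mul 2)
  refine (hlim.comp tendsto_inv_nhdsGT_zero).congr' ?_
  filter_upwards [self_mem_nhdsWithin] with y hy
  exact (hformula y hy).symm
end

section
/- Let σ ∈ ℝ, let m = ⌈|σ|⌉, and let C_n = sup_{y>0} yⁿ R(y) with R(y) = 2∑_{k=1}^∞ e^{-π k² y²}. Define 𝒲_σ(x) = ∫_{-∞}^{∞} R(e^y) R(e^{x−y}) e^{x + (2σ−1)y} dy. Then for all x ≥ 0, 𝒲_σ(x) ≤ (C₁ + C_{4m+3}) C_{2m+3} e^{−2(m+1)x}. -/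
/-
The theta tail satisfies `y R(y) ≤ 1`, by comparing the sum with the Gaussian integral, and
`R(2y) ≤ e^{-3πy²} R(y)`; together they make every `C_n` with `n ≥ 1` finite, so that
`R(e^t) ≤ C_n e^{-nt}`. Bounding `R(e^{x-y})` this way with `n = 2m+3` extracts the factor
`e^{-2(m+1)x}`, and the remaining weight `R(e^y) e^{(2m+2+2σ)y}` has integral at most `C₁ + C_{4m+3}`:
use `n = 1` for `y ≤ 0` and `n = 4m+3` for `y > 0`, where `2 ≤ 2m+2+2σ ≤ 4m+2` since `|σ| ≤ m`.
-/

open Real Set MeasureTheory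

noncomputable def Wf (σ x : ℝ) : ℝ :=
  ∫ y : ℝ, Rf (Real.exp y) * Rf (Real.exp (x - y)) * Real.exp (x + (2 * σ - 1) * y)

noncomputable def Cn (n : ℕ) : ℝ := sSup {x : ℝ | ∃ y : ℝ, 0 < y ∧ x = y ^ n * Rf y}

lemma antitoneOn_exp_neg_pi_mul_sq (y : ℝ) :
    AntitoneOn (fun t : ℝ => exp (-π * t ^ 2 * y ^ 2)) (Ici 0) := by
  intro s hs t ht hst
  simp only [exp_le_exp]
  have : s ^ 2 ≤ t ^ 2 := pow_le_pow_left₀ hs hst 2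
  have : 0 ≤ π * y ^ 2 := by positivity
  nlinarith

lemma integrableOn_exp_neg_pi_mul_sq {y : ℝ} (hy : y ≠ 0) :
    IntegrableOn (fun t : ℝ => exp (-π * t ^ 2 * y ^ 2)) (Ioi 0) := by
  have h := (integrable_exp_neg_mul_sq (b := π * y ^ 2) (by positivity)).integrableOn (s := Ioi 0)
  convert h using 3 with t
  ring_nf

lemma summable_Rf {y : ℝ} (hy : y ≠ 0) :
    Summable fun k : ℕ => exp (-π * ((k : ℝ) + 1) ^ 2 * y ^ 2) := by
  have h := (antitoneOn_exp_neg_pi_mul_sq y).summable_of_integrableOn_Ioi_zero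
    (integrableOn_exp_neg_pi_mul_sq hy) fun t _ => (exp_pos _).le
  exact_mod_cast (summable_nat_add_iff 1).2 h

lemma Rf_nonneg (y : ℝ) : 0 ≤ Rf y :=
  mul_nonneg zero_le_two (tsum_nonneg fun _ => (exp_pos _).le)

lemma abs_mul_Rf_le_one {y : ℝ} (hy : y ≠ 0) : |y| * Rf y ≤ 1 := by
  have h := (antitoneOn_exp_neg_pi_mul_sq y).tsum_add_one_le_integral
    (integrableOn_exp_neg_pi_mul_sq hy) fun t _ => (exp_pos _).le
  have hint : ∫ t in Ioi (0 : ℝ), exp (-π * t ^ 2 * y ^ 2) = |y|⁻¹ / 2 := by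
    calc ∫ t in Ioi (0 : ℝ), exp (-π * t ^ 2 * y ^ 2)
        = ∫ t in Ioi (0 : ℝ), exp (-(π * y ^ 2) * t ^ 2) := by congr 1; funext t; congr 1; ring
      _ = |y|⁻¹ / 2 := by
        rw [integral_gaussian_Ioi, div_mul_cancel_left₀ pi_pos.ne', ← inv_pow, sqrt_sq_eq_abs,
          abs_inv]
  push_cast at h
  have hRf : Rf y ≤ |y|⁻¹ := by rw [Rf]; linarith
  calc |y| * Rf y ≤ |y| * |y|⁻¹ := by gcongr
    _ = 1 := mul_inv_cancel₀ (abs_ne_zero.2 hy)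

lemma Rf_two_mul_le {y : ℝ} (hy : y ≠ 0) : Rf (2 * y) ≤ exp (-3 * π * y ^ 2) * Rf y := by
  have hterm (k : ℕ) : exp (-π * ((k : ℝ) + 1) ^ 2 * (2 * y) ^ 2)
      ≤ exp (-3 * π * y ^ 2) * exp (-π * ((k : ℝ) + 1) ^ 2 * y ^ 2) := by
    rw [← exp_add, exp_le_exp]
    have : 1 ≤ ((k : ℝ) + 1) ^ 2 := one_le_pow₀ (by linarith [k.cast_nonneg (α := ℝ)])
    have : 0 ≤ π * y ^ 2 := by positivity
    nlinarith
  have hle := (summable_Rf (mul_ne_zero two_ne_zero hy)).tsum_le_tsum hterm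
    ((summable_Rf hy).mul_left _)
  rw [tsum_mul_left] at hle
  rw [Rf, Rf]
  nlinarith [exp_pos (-3 * π * y ^ 2)]

lemma pow_mul_exp_neg_sq_le (n : ℕ) {y : ℝ} (hy : 0 ≤ y) :
    y ^ n * exp (-y ^ 2) ≤ exp 1 * n.factorial := by
  have hfac : y ^ n ≤ n.factorial * exp y := by
    have := pow_div_factorial_le_exp _ hy n
    rwa [div_le_iff₀ (by positivity), mul_comm] at this
  have hexp : exp (-y ^ 2) ≤ exp 1 * exp (-y) := by
    rw [← exp_add, exp_le_exp]
    nlinarith [sq_nonneg (y - 1 / 2)]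
  calc y ^ n * exp (-y ^ 2) ≤ (n.factorial * exp y) * (exp 1 * exp (-y)) :=
        mul_le_mul hfac hexp (exp_pos _).le (by positivity)
    _ = exp 1 * n.factorial := by
        rw [mul_mul_mul_comm, mul_comm (exp y), ← exp_add, neg_add_cancel, exp_zero, mul_one,
          mul_comm]

lemma pow_succ_mul_Rf_le (n : ℕ) {y : ℝ} (hy : 0 < y) :
    y ^ (n + 1) * Rf y ≤ 2 ^ (n + 1) * (exp 1 * n.factorial) := by
  obtain ⟨z, rfl⟩ : ∃ z, y = 2 * z := ⟨y / 2, by ring⟩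
  have hz0 : 0 < z := by linarith
  have hzR : z * Rf z ≤ 1 := by simpa [abs_of_pos hz0] using abs_mul_Rf_le_one hz0.ne'
  have hexp : exp (-3 * π * z ^ 2) ≤ exp (-z ^ 2) := by
    rw [exp_le_exp]
    nlinarith [pi_gt_three, sq_nonneg z]
  calc (2 * z) ^ (n + 1) * Rf (2 * z)
        ≤ (2 * z) ^ (n + 1) * (exp (-3 * π * z ^ 2) * Rf z) := by
        gcongr; exact Rf_two_mul_le hz0.ne'
    _ = 2 ^ (n + 1) * (z ^ n * exp (-3 * π * z ^ 2)) * (z * Rf z) := by ring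
    _ ≤ 2 ^ (n + 1) * (exp 1 * n.factorial) * 1 := by
        have hpow : z ^ n * exp (-3 * π * z ^ 2) ≤ exp 1 * n.factorial :=
          (mul_le_mul_of_nonneg_left hexp (by positivity)).trans (pow_mul_exp_neg_sq_le n hz0.le)
        gcongr
        exact mul_nonneg hz0.le (Rf_nonneg z)
    _ = 2 ^ (n + 1) * (exp 1 * n.factorial) := mul_one _

lemma bddAbove_pow_mul_Rf {n : ℕ} (hn : 1 ≤ n) :
    BddAbove {x : ℝ | ∃ y : ℝ, 0 < y ∧ x = y ^ n * Rf y} := by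
  obtain ⟨j, rfl⟩ := Nat.exists_eq_add_of_le' hn
  exact ⟨_, fun _ ⟨y, hy, hx⟩ => hx ▸ pow_succ_mul_Rf_le j hy⟩

lemma pow_mul_Rf_le_Cn {n : ℕ} (hn : 1 ≤ n) {y : ℝ} (hy : 0 < y) : y ^ n * Rf y ≤ Cn n :=
  le_csSup (bddAbove_pow_mul_Rf hn) ⟨y, hy, rfl⟩

lemma Cn_nonneg {n : ℕ} (hn : 1 ≤ n) : 0 ≤ Cn n :=
  (Rf_nonneg 1).trans (by simpa using pow_mul_Rf_le_Cn hn one_pos)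

lemma Rf_exp_le {n : ℕ} (hn : 1 ≤ n) (t : ℝ) : Rf (exp t) ≤ Cn n * exp (-n * t) := by
  have h := pow_mul_Rf_le_Cn hn (exp_pos t)
  rw [← exp_nat_mul] at h
  calc Rf (exp t) = exp (-n * t) * (exp (n * t) * Rf (exp t)) := by
        rw [← mul_assoc, ← exp_add, neg_mul, neg_add_cancel, exp_zero, one_mul]
    _ ≤ exp (-n * t) * Cn n := by gcongr
    _ = Cn n * exp (-n * t) := mul_comm _ _

lemma measurable_Rf_exp : Measurable fun t : ℝ => Rf (exp t) := by
  refine Measurable.const_mul (measurable_of_tendsto_metrizable (f := fun N t =>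
    ∑ k ∈ Finset.range N, exp (-π * ((k : ℝ) + 1) ^ 2 * exp t ^ 2)) (fun N => ?_) ?_) 2
  · exact Finset.measurable_sum _ fun k _ => by fun_prop
  · exact tendsto_pi_nhds.2 fun t => (summable_Rf (exp_pos t).ne').hasSum.tendsto_sum_nat

lemma integrable_and_integral_le_of_le_exp {f : ℝ → ℝ} (hf : AEStronglyMeasurable f)
    (hf0 : ∀ y, 0 ≤ f y) {A B : ℝ} (hA : ∀ y ∈ Iic 0, f y ≤ A * exp y)
    (hB : ∀ y ∈ Ioi 0, f y ≤ B * exp (-y)) :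
    Integrable f ∧ ∫ y, f y ≤ A + B := by
  have hA_int : IntegrableOn (fun y => A * exp y) (Iic 0) := (integrableOn_exp_Iic 0).const_mul A
  have hB_int : IntegrableOn (fun y => B * exp (-y)) (Ioi 0) :=
    (integrableOn_exp_neg_Ioi 0).const_mul B
  have hIic : IntegrableOn f (Iic 0) := hA_int.mono' hf.restrict <|
    (ae_restrict_iff' measurableSet_Iic).2 <| ae_of_all _ fun y hy => by
      rw [norm_of_nonneg (hf0 y)]; exact hA y hy
  have hIoi : IntegrableOn f (Ioi 0) := hB_int.mono' hf.restrict <|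
    (ae_restrict_iff' measurableSet_Ioi).2 <| ae_of_all _ fun y hy => by
      rw [norm_of_nonneg (hf0 y)]; exact hB y hy
  have hint : Integrable f := by simpa using hIic.union hIoi
  refine ⟨hint, ?_⟩
  calc ∫ y, f y = (∫ y in Iic 0, f y) + ∫ y in Ioi 0, f y := by
        rw [← compl_Iic, integral_add_compl measurableSet_Iic hint]
    _ ≤ (∫ y in Iic 0, A * exp y) + ∫ y in Ioi 0, B * exp (-y) :=
        add_le_add (setIntegral_mono_on hIic hA_int measurableSet_Iic hA)
          (setIntegral_mono_on hIoi hB_int measurableSet_Ioi hB)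
    _ = A + B := by
        rw [integral_const_mul, integral_const_mul, integral_exp_Iic_zero,
          integral_exp_neg_Ioi_zero, mul_one, mul_one]

lemma integrable_and_integral_Rf_exp_mul_exp_le {c : ℝ} {p q : ℕ} (hp : 1 ≤ p)
    (hpc : (p : ℝ) + 1 ≤ c) (hcq : c + 1 ≤ q) :
    Integrable (fun y => Rf (exp y) * exp (c * y)) ∧
      ∫ y, Rf (exp y) * exp (c * y) ≤ Cn p + Cn q := by
  have hq : 1 ≤ q := by
    exact_mod_cast (show (1 : ℝ) ≤ q by linarith [(Nat.one_le_cast.2 hp : (1 : ℝ) ≤ p)])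
  have hdecay {n : ℕ} (hn : 1 ≤ n) (y : ℝ) :
      Rf (exp y) * exp (c * y) ≤ Cn n * exp ((c - n) * y) :=
    calc Rf (exp y) * exp (c * y) ≤ Cn n * exp (-n * y) * exp (c * y) := by
          gcongr; exact Rf_exp_le hn y
      _ = Cn n * exp ((c - n) * y) := by rw [mul_assoc, ← exp_add]; ring_nf
  refine integrable_and_integral_le_of_le_exp
    (measurable_Rf_exp.mul (by fun_prop)).aestronglyMeasurable
    (fun y => mul_nonneg (Rf_nonneg _) (exp_pos _).le) (fun y hy => ?_) (fun y hy => ?_)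
  · refine (hdecay hp y).trans (mul_le_mul_of_nonneg_left (exp_le_exp.2 ?_) (Cn_nonneg hp))
    nlinarith [mem_Iic.1 hy]
  · refine (hdecay hq y).trans (mul_le_mul_of_nonneg_left (exp_le_exp.2 ?_) (Cn_nonneg hq))
    nlinarith [mem_Ioi.1 hy]

lemma Wf_integrand_le {n : ℕ} (hn : 1 ≤ n) (σ x y : ℝ) :
    Rf (exp y) * Rf (exp (x - y)) * exp (x + (2 * σ - 1) * y)
      ≤ Cn n * exp (-(n - 1) * x) * (Rf (exp y) * exp ((n - 1 + 2 * σ) * y)) := by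
  have hexp : exp (-n * (x - y)) * exp (x + (2 * σ - 1) * y)
      = exp (-(n - 1) * x) * exp ((n - 1 + 2 * σ) * y) := by
    rw [← exp_add, ← exp_add]; ring_nf
  calc Rf (exp y) * Rf (exp (x - y)) * exp (x + (2 * σ - 1) * y)
      ≤ Rf (exp y) * (Cn n * exp (-n * (x - y))) * exp (x + (2 * σ - 1) * y) := by
        gcongr
        · exact Rf_nonneg _
        · exact Rf_exp_le hn _
    _ = Cn n * exp (-(n - 1) * x) * (Rf (exp y) * exp ((n - 1 + 2 * σ) * y)) := by
        linear_combination Rf (exp y) * Cn n * hexp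

theorem W_decay_bound_general (σ : ℝ) (x : ℝ) :
    Wf σ x ≤ (Cn 1 + Cn (4 * ⌈|σ|⌉₊ + 3)) * Cn (2 * ⌈|σ|⌉₊ + 3) *
      Real.exp (-2 * (⌈|σ|⌉₊ + 1) * x) := by
  set m := ⌈|σ|⌉₊
  obtain ⟨hσl, hσu⟩ := abs_le.1 (Nat.le_ceil |σ|)
  set n := 2 * m + 3
  set K := Cn n * exp (-(n - 1) * x)
  obtain ⟨hF, hF_le⟩ := integrable_and_integral_Rf_exp_mul_exp_le (c := n - 1 + 2 * σ) (p := 1)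
    (q := 4 * m + 3) le_rfl (by push_cast [n]; linarith) (by push_cast [n]; linarith)
  calc Wf σ x ≤ ∫ y, K * (Rf (exp y) * exp ((n - 1 + 2 * σ) * y)) :=
        integral_mono_of_nonneg
          (ae_of_all _ fun y => mul_nonneg (mul_nonneg (Rf_nonneg _) (Rf_nonneg _)) (exp_pos _).le)
          (hF.const_mul K) (ae_of_all _ (Wf_integrand_le (by omega) σ x))
    _ = K * ∫ y, Rf (exp y) * exp ((n - 1 + 2 * σ) * y) := integral_const_mul _ _
    _ ≤ K * (Cn 1 + Cn (4 * m + 3)) :=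
        mul_le_mul_of_nonneg_left hF_le (mul_nonneg (Cn_nonneg (by omega)) (exp_pos _).le)
    _ = _ := by
        have hexp : -((n : ℝ) - 1) * x = -2 * (m + 1) * x := by push_cast [n]; ring
        simp only [K, hexp]; ring

theorem W_decay_bound (σ : ℝ) (x : ℝ) (hx : 0 ≤ x) :
    Wf σ x ≤ (Cn 1 + Cn (4 * ⌈|σ|⌉₊ + 3)) * Cn (2 * ⌈|σ|⌉₊ + 3) *
      Real.exp (-2 * (⌈|σ|⌉₊ + 1) * x) :=
  W_decay_bound_general σ x
end
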